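/- Let P be a finite set of points in the plane ℝ² and let k be an integer with 2 ≤ k ≤ |P|. Let OPT = min{ w(T) : T ⊆ P, |T| = k }. Then there exists a point c ∈ ℝ² whose x-coordinate is the x-coordinate of some point of P and whose y-coordinate is the y-coordinate of some point of P, such that EVERY subset S ⊆ P with |S| = k that is a set of k nearest points of P to c satisfies w(S) ≤ (7/4)·OPT. (This is the approximation guarantee of the Manhattan Median algorithm MM on 2D point sets.) -/

import Mathlib

open Finset

/-- The L1 (Manhattan) distance between two points of the plane. -/
noncomputable def dist1 (p q : Fin 2 → ℝ) : ℝ := ∑ i, |p i - q i|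

/-- The sum of L1 distances over all unordered pairs of distinct points of `S`. -/
noncomputable def w (S : Finset (Fin 2 → ℝ)) : ℝ := (∑ p ∈ S, ∑ q ∈ S, dist1 p q) / 2

/-!
Let `T` be an optimal `k`-set and choose `c` coordinatewise among the coordinates of `T`, minimizing
`x ↦ ∑_{q ∈ T} |x - q i|`; then `∑_{p,q ∈ T} ‖c - q‖₁ ≤ ∑_{p,q ∈ T} ‖p - q‖₁`. With `a = ‖p - c‖₁`,
`b = ‖q - c‖₁` put `R(p, q) = (a + b + max a b) / 2 = 3/4 (a + b) + |a - b| / 4`.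

* For every finite `S`, `∑_S ‖p - q‖₁ ≤ ∑_S R`: whenever `p - c` and `q - c` have the same sign in
  a coordinate, the bound `‖p - q‖₁ ≤ a + b` improves by twice the smaller of the two offsets, and a
  layer-cake induction over the level sets of `‖· - c‖₁`, combined with Cauchy–Schwarz over the two
  sign classes in each coordinate, shows that these savings add up to at least
  `1/4 ∑_S min a b`.
* `R` is monotone in `a` and `b`, so a set `S` of `k` nearest points to `c` has `∑_S R ≤ ∑_T R`.
* `R ≤ 3/4 (a + b) + ‖p - q‖₁ / 4`, and the choice of `c` gives `∑_T R ≤ 7/4 ∑_T ‖p - q‖₁`.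
-/

theorem sum_sum_min_mul_le_of_forall_subset {ι : Type*} [DecidableEq ι] {a b : ι → ι → ℝ}
    (I : Finset ι) (d : ι → ℝ) (hd : ∀ i ∈ I, 0 ≤ d i)
    (hab : ∀ L ⊆ I, ∑ i ∈ L, ∑ j ∈ L, a i j ≤ ∑ i ∈ L, ∑ j ∈ L, b i j) :
    ∑ i ∈ I, ∑ j ∈ I, min (d i) (d j) * a i j ≤ ∑ i ∈ I, ∑ j ∈ I, min (d i) (d j) * b i j := by
  induction I using Finset.strongInduction generalizing d with
  | H I ih =>
    rcases I.eq_empty_or_nonempty with rfl | hI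
    · simp
    obtain ⟨i₀, hi₀, hmin⟩ := I.exists_min_image d hI
    set δ := d i₀
    -- Peel off the bottom layer `min (d i) (d j) ≥ δ`; the point `i₀` then drops out.
    have peel (f : ι → ι → ℝ) : ∑ i ∈ I, ∑ j ∈ I, min (d i) (d j) * f i j
        = δ * ∑ i ∈ I, ∑ j ∈ I, f i j
          + ∑ i ∈ I.erase i₀, ∑ j ∈ I.erase i₀, min (d i - δ) (d j - δ) * f i j := by
      have hzero : ∀ i ∈ I, min (d i - δ) 0 = 0 := fun i hi =>
        min_eq_right (sub_nonneg.2 (hmin i hi))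
      have herase : ∑ i ∈ I.erase i₀, ∑ j ∈ I.erase i₀, min (d i - δ) (d j - δ) * f i j
          = ∑ i ∈ I, ∑ j ∈ I, min (d i - δ) (d j - δ) * f i j := by
        rw [← sum_erase I (a := i₀) (sum_eq_zero fun j hj => by simp [δ, min_comm, hzero j hj])]
        exact sum_congr rfl fun i hi => sum_erase _ (by simp [δ, hzero i (mem_of_mem_erase hi)])
      rw [herase, mul_sum, ← sum_add_distrib]
      refine sum_congr rfl fun i _ => ?_
      rw [mul_sum, ← sum_add_distrib]
      refine sum_congr rfl fun j _ => ?_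
      rw [min_sub_sub_right]
      ring
    rw [peel a, peel b]
    exact add_le_add (mul_le_mul_of_nonneg_left (hab I subset_rfl) (hd i₀ hi₀))
      (ih _ (erase_ssubset hi₀) _ (fun i hi => sub_nonneg.2 (hmin i (mem_of_mem_erase hi)))
        fun L hL => hab L (hL.trans (erase_subset _ _)))

section SignClasses

variable {ι : Type*}

noncomputable def minIfSame (ξ : ι → Bool) (x : ι → ℝ) (i j : ι) : ℝ :=
  if ξ i = ξ j then min (x i) (x j) else 0

theorem sq_sum_le_two_mul_sum_sum_ite (L : Finset ι) (t : ι → ℝ) (ξ : ι → Bool) :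
    (∑ i ∈ L, t i) ^ 2 ≤ 2 * ∑ i ∈ L, ∑ j ∈ L, if ξ i = ξ j then t i * t j else 0 := by
  set σ : ι → ℝ := fun i => if ξ i then 1 else -1
  -- `[ξ i = ξ j] = (1 + σ i * σ j) / 2`
  have key : 2 * ∑ i ∈ L, ∑ j ∈ L, (if ξ i = ξ j then t i * t j else 0)
      = (∑ i ∈ L, t i) ^ 2 + (∑ i ∈ L, σ i * t i) ^ 2 := by
    rw [sq, sq, sum_mul_sum, sum_mul_sum, mul_sum, ← sum_add_distrib]
    refine sum_congr rfl fun i _ => ?_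
    rw [mul_sum, ← sum_add_distrib]
    refine sum_congr rfl fun j _ => ?_
    cases hi : ξ i <;> cases hj : ξ j <;> simp [σ, hi, hj] <;> ring
  rw [key]
  linarith [sq_nonneg (∑ i ∈ L, σ i * t i)]

theorem sq_sum_le_two_mul_sum_sum_minIfSame (L : Finset ι) (t : ι → ℝ) (ξ : ι → Bool)
    (ht₀ : ∀ i ∈ L, 0 ≤ t i) (ht₁ : ∀ i ∈ L, t i ≤ 1) :
    (∑ i ∈ L, t i) ^ 2 ≤ 2 * ∑ i ∈ L, ∑ j ∈ L, minIfSame ξ t i j := by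
  refine (sq_sum_le_two_mul_sum_sum_ite L t ξ).trans (mul_le_mul_of_nonneg_left
    (sum_le_sum fun i hi => sum_le_sum fun j hj => ?_) zero_le_two)
  unfold minIfSame
  split_ifs
  · exact le_min (mul_le_of_le_one_right (ht₀ i hi) (ht₁ j hj))
      (mul_le_of_le_one_left (ht₀ j hj) (ht₁ i hi))
  · rfl

theorem card_sq_le_four_mul_sum_sum_minIfSame (L : Finset ι) (t : ι → ℝ) (ξ η : ι → Bool)
    (ht₀ : ∀ i ∈ L, 0 ≤ t i) (ht₁ : ∀ i ∈ L, t i ≤ 1) :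
    (L.card : ℝ) ^ 2
      ≤ 4 * ∑ i ∈ L, ∑ j ∈ L, (minIfSame ξ t i j + minIfSame η (1 - t) i j) := by
  have hx := sq_sum_le_two_mul_sum_sum_minIfSame L t ξ ht₀ ht₁
  have hy := sq_sum_le_two_mul_sum_sum_minIfSame L (1 - t) η
    (fun i hi => by simp [ht₁ i hi]) (fun i hi => by simp [ht₀ i hi])
  have hcard : (L.card : ℝ) = ∑ i ∈ L, t i + ∑ i ∈ L, (1 - t) i := by
    rw [← sum_add_distrib]; simp
  simp only [sum_add_distrib]
  nlinarith [sq_nonneg (∑ i ∈ L, t i - ∑ i ∈ L, (1 - t) i)]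

theorem min_mul_minIfSame_le (ζ : ι → Bool) (d u : ι → ℝ) {i j : ι} (hdi : 0 ≤ d i)
    (hdj : 0 ≤ d j) (hui : 0 ≤ u i) (huj : 0 ≤ u j) :
    min (d i) (d j) * minIfSame ζ u i j ≤ minIfSame ζ (d * u) i j := by
  unfold minIfSame
  split_ifs
  · exact le_min (mul_le_mul (min_le_left _ _) (min_le_left _ _) (le_min hui huj) hdi)
      (mul_le_mul (min_le_right _ _) (min_le_right _ _) (le_min hui huj) hdj)
  · simp

variable [DecidableEq ι]

theorem sum_sum_min_add_le_four_mul (I : Finset ι) (x y : ι → ℝ) (ξ η : ι → Bool)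
    (hx : ∀ i ∈ I, 0 ≤ x i) (hy : ∀ i ∈ I, 0 ≤ y i) :
    ∑ i ∈ I, ∑ j ∈ I, min (x i + y i) (x j + y j)
      ≤ 4 * ∑ i ∈ I, ∑ j ∈ I, (minIfSame ξ x i j + minIfSame η y i j) := by
  set d : ι → ℝ := x + y
  set t : ι → ℝ := x / d
  have hd : ∀ i ∈ I, 0 ≤ d i := fun i hi => add_nonneg (hx i hi) (hy i hi)
  have ht₀ : ∀ i ∈ I, 0 ≤ t i := fun i hi => div_nonneg (hx i hi) (hd i hi)
  have ht₁ : ∀ i ∈ I, t i ≤ 1 := fun i hi =>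
    div_le_one_of_le₀ (le_add_of_nonneg_right (hy i hi)) (hd i hi)
  have hxt : ∀ i ∈ I, (d * t) i = x i := by
    intro i hi
    rcases eq_or_ne (d i) 0 with h | h
    · have : x i = 0 := by linarith [hx i hi, hy i hi, show x i + y i = 0 from h]
      simp [h, this]
    · exact mul_div_cancel₀ _ h
  have hyt : ∀ i ∈ I, (d * (1 - t)) i = y i := fun i hi => by
    have := hxt i hi
    simp only [Pi.mul_apply, Pi.sub_apply, Pi.one_apply] at this ⊢
    rw [mul_one_sub, this]
    simp [d]
  have hlayer := sum_sum_min_mul_le_of_forall_subset (a := fun _ _ => 1)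
    (b := fun i j => 4 * (minIfSame ξ t i j + minIfSame η (1 - t) i j)) I d hd fun L hL => by
      simpa [← mul_sum, sq] using card_sq_le_four_mul_sum_sum_minIfSame L t ξ η
        (fun i hi => ht₀ i (hL hi)) (fun i hi => ht₁ i (hL hi))
  calc ∑ i ∈ I, ∑ j ∈ I, min (x i + y i) (x j + y j)
      = ∑ i ∈ I, ∑ j ∈ I, min (d i) (d j) * 1 := by simp [d]
    _ ≤ ∑ i ∈ I, ∑ j ∈ I, min (d i) (d j) * (4 * (minIfSame ξ t i j + minIfSame η (1 - t) i j)) :=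
      hlayer
    _ ≤ 4 * ∑ i ∈ I, ∑ j ∈ I, (minIfSame ξ x i j + minIfSame η y i j) := by
      rw [mul_sum]
      refine sum_le_sum fun i hi => ?_
      rw [mul_sum]
      refine sum_le_sum fun j hj => ?_
      have hξ := min_mul_minIfSame_le ξ d t (hd i hi) (hd j hj) (ht₀ i hi) (ht₀ j hj)
      have hη := min_mul_minIfSame_le η d (1 - t) (hd i hi) (hd j hj)
        (by simp [ht₁ i hi]) (by simp [ht₁ j hj])
      simp only [minIfSame, hxt i hi, hxt j hj, hyt i hi, hyt j hj] at hξ hη ⊢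
      rw [mul_left_comm, mul_add]
      linarith

end SignClasses

theorem sum_le_sum_of_forall_le_of_card_eq {α M : Type*} [AddCommMonoid M] [LinearOrder M]
    [AddLeftMono M] {A B : Finset α} (hcard : A.card = B.card) {f : α → M}
    (hAB : ∀ a ∈ A, ∀ b ∈ B, f a ≤ f b) : ∑ a ∈ A, f a ≤ ∑ b ∈ B, f b := by
  rcases A.eq_empty_or_nonempty with rfl | hA
  · rw [card_empty, eq_comm, card_eq_zero] at hcard; simp [hcard]
  calc ∑ a ∈ A, f a ≤ A.card • A.sup' hA f := sum_le_card_nsmul _ _ _ fun a ha => le_sup' f ha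
    _ = B.card • A.sup' hA f := by rw [hcard]
    _ ≤ ∑ b ∈ B, f b := card_nsmul_le_sum _ _ _ fun b hb => sup'_le _ _ fun a ha => hAB a ha b hb

section Exchange

variable {α : Type*} [DecidableEq α] {P S T : Finset α} {d : α → ℝ}

theorem sum_le_sum_of_nearest (hTP : T ⊆ P) (hcard : S.card = T.card)
    (hnear : ∀ s ∈ S, ∀ t ∈ P \ S, d s ≤ d t) {g : ℝ → ℝ} (hg : Monotone g) :
    ∑ p ∈ S, g (d p) ≤ ∑ p ∈ T, g (d p) := by
  rw [← sum_inter_add_sum_sdiff S T, ← sum_inter_add_sum_sdiff T S, inter_comm]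
  refine add_le_add_right (sum_le_sum_of_forall_le_of_card_eq (card_sdiff_comm hcard) ?_) _
  intro s hs t ht
  exact hg (hnear s (sdiff_subset hs) t (sdiff_subset_sdiff hTP subset_rfl ht))

theorem sum_sum_le_sum_sum_of_nearest (hTP : T ⊆ P) (hcard : S.card = T.card)
    (hnear : ∀ s ∈ S, ∀ t ∈ P \ S, d s ≤ d t) {f : ℝ → ℝ → ℝ}
    (hf₁ : ∀ b, Monotone fun a => f a b) (hf₂ : ∀ a, Monotone (f a)) :
    ∑ p ∈ S, ∑ q ∈ S, f (d p) (d q) ≤ ∑ p ∈ T, ∑ q ∈ T, f (d p) (d q) :=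
  calc ∑ p ∈ S, ∑ q ∈ S, f (d p) (d q)
      ≤ ∑ p ∈ S, ∑ q ∈ T, f (d p) (d q) :=
        sum_le_sum fun _ _ => sum_le_sum_of_nearest hTP hcard hnear (hf₂ _)
    _ ≤ ∑ p ∈ T, ∑ q ∈ T, f (d p) (d q) :=
        sum_le_sum_of_nearest (g := fun a => ∑ q ∈ T, f a (d q)) hTP hcard hnear
          fun _ _ hab => sum_le_sum fun _ _ => hf₁ _ hab

end Exchange

theorem abs_sub_add_two_mul_min_le (a b : ℝ) :
    |a - b| + 2 * (if decide (0 ≤ a) = decide (0 ≤ b) then min |a| |b| else 0) ≤ |a| + |b| := by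
  split_ifs with h
  · rw [decide_eq_decide] at h
    have key (u v : ℝ) : |u - v| + 2 * min u v = u + v := by
      rw [← max_sub_min_eq_abs']; linarith [min_add_max u v]
    rcases le_or_gt 0 a with ha | ha
    · rw [abs_of_nonneg ha, abs_of_nonneg (h.1 ha), key]
    · have hb : b < 0 := lt_of_not_ge fun hb => ha.not_ge (h.2 hb)
      have := key (-a) (-b)
      rw [show -a - -b = -(a - b) by ring, abs_neg] at this
      rw [abs_of_neg ha, abs_of_neg hb, this]
  · linarith [abs_sub a b]

theorem dist1_eq (p q : Fin 2 → ℝ) : dist1 p q = |p 0 - q 0| + |p 1 - q 1| := by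
  simp [dist1, Fin.sum_univ_two]

theorem dist1_comm (p q : Fin 2 → ℝ) : dist1 p q = dist1 q p := by
  simp only [dist1, abs_sub_comm]

theorem dist1_le_add (p q r : Fin 2 → ℝ) : dist1 p r ≤ dist1 p q + dist1 q r := by
  simp only [dist1, ← sum_add_distrib]
  exact sum_le_sum fun i _ => abs_sub_le _ _ _

theorem abs_dist1_sub_dist1_le (p q c : Fin 2 → ℝ) : |dist1 p c - dist1 q c| ≤ dist1 p q :=
  abs_sub_le_iff.2
    ⟨by linarith [dist1_le_add p q c], by linarith [dist1_le_add q p c, dist1_comm p q]⟩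

-- Equals `3/4 (a + b) + |a - b| / 4` for `a = dist1 p c`, `b = dist1 q c`.
noncomputable def radialCost (c p q : Fin 2 → ℝ) : ℝ :=
  (dist1 p c + dist1 q c + max (dist1 p c) (dist1 q c)) / 2

theorem sum_sum_radialCost_le_of_nearest {P S T : Finset (Fin 2 → ℝ)} {c : Fin 2 → ℝ}
    (hTP : T ⊆ P) (hcard : S.card = T.card) (hnear : ∀ s ∈ S, ∀ t ∈ P \ S, dist1 s c ≤ dist1 t c) :
    ∑ p ∈ S, ∑ q ∈ S, radialCost c p q ≤ ∑ p ∈ T, ∑ q ∈ T, radialCost c p q :=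
  sum_sum_le_sum_sum_of_nearest (f := fun a b => (a + b + max a b) / 2) hTP hcard hnear
    (fun _ _ _ hab => by dsimp only; gcongr) (fun _ _ _ hab => by dsimp only; gcongr)

theorem sum_sum_dist1_le_sum_sum_radialCost (S : Finset (Fin 2 → ℝ)) (c : Fin 2 → ℝ) :
    ∑ p ∈ S, ∑ q ∈ S, dist1 p q ≤ ∑ p ∈ S, ∑ q ∈ S, radialCost c p q := by
  set x : (Fin 2 → ℝ) → ℝ := fun p => |p 0 - c 0|
  set y : (Fin 2 → ℝ) → ℝ := fun p => |p 1 - c 1|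
  set ξ : (Fin 2 → ℝ) → Bool := fun p => decide (0 ≤ p 0 - c 0)
  set η : (Fin 2 → ℝ) → Bool := fun p => decide (0 ≤ p 1 - c 1)
  set E : (Fin 2 → ℝ) → (Fin 2 → ℝ) → ℝ := fun p q => minIfSame ξ x p q + minIfSame η y p q
  have hpair (p q : Fin 2 → ℝ) :
      dist1 p q ≤ radialCost c p q + (min (dist1 p c) (dist1 q c) / 2 - 2 * E p q) := by
    have h₀ := abs_sub_add_two_mul_min_le (p 0 - c 0) (q 0 - c 0)
    have h₁ := abs_sub_add_two_mul_min_le (p 1 - c 1) (q 1 - c 1)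
    rw [sub_sub_sub_cancel_right] at h₀ h₁
    have := min_add_max (dist1 p c) (dist1 q c)
    simp only [radialCost, E, minIfSame, x, y, ξ, η, dist1_eq] at *
    linarith
  have hlayer : ∑ p ∈ S, ∑ q ∈ S, min (dist1 p c) (dist1 q c) ≤ 4 * ∑ p ∈ S, ∑ q ∈ S, E p q := by
    simpa only [dist1_eq] using sum_sum_min_add_le_four_mul S x y ξ η
      (fun _ _ => abs_nonneg _) (fun _ _ => abs_nonneg _)
  calc ∑ p ∈ S, ∑ q ∈ S, dist1 p q
      ≤ ∑ p ∈ S, ∑ q ∈ S, (radialCost c p q + (min (dist1 p c) (dist1 q c) / 2 - 2 * E p q)) :=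
        sum_le_sum fun p _ => sum_le_sum fun q _ => hpair p q
    _ = ∑ p ∈ S, ∑ q ∈ S, radialCost c p q
          + (∑ p ∈ S, ∑ q ∈ S, min (dist1 p c) (dist1 q c) - 4 * ∑ p ∈ S, ∑ q ∈ S, E p q) / 2 := by
        simp only [sum_add_distrib, sum_sub_distrib, ← mul_sum, ← sum_div]; ring
    _ ≤ ∑ p ∈ S, ∑ q ∈ S, radialCost c p q := by linarith

theorem sum_sum_dist1_center_le (T : Finset (Fin 2 → ℝ)) (c : Fin 2 → ℝ)
    (hc : ∀ i, ∀ p ∈ T, ∑ q ∈ T, |c i - q i| ≤ ∑ q ∈ T, |p i - q i|) :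
    ∑ _p ∈ T, ∑ q ∈ T, dist1 c q ≤ ∑ p ∈ T, ∑ q ∈ T, dist1 p q := by
  refine sum_le_sum fun p hp => ?_
  simp only [dist1]
  rw [sum_comm, sum_comm (s := T)]
  exact sum_le_sum fun i _ => hc i p hp

theorem sum_sum_radialCost_le (T : Finset (Fin 2 → ℝ)) (c : Fin 2 → ℝ)
    (hc : ∀ i, ∀ p ∈ T, ∑ q ∈ T, |c i - q i| ≤ ∑ q ∈ T, |p i - q i|) :
    ∑ p ∈ T, ∑ q ∈ T, radialCost c p q ≤ 7 / 4 * ∑ p ∈ T, ∑ q ∈ T, dist1 p q := by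
  have hpair (p q : Fin 2 → ℝ) :
      radialCost c p q ≤ 3 / 4 * (dist1 c p + dist1 c q) + dist1 p q / 4 := by
    have := abs_dist1_sub_dist1_le p q c
    have := max_sub_min_eq_abs' (dist1 p c) (dist1 q c)
    have := min_add_max (dist1 p c) (dist1 q c)
    rw [radialCost, dist1_comm c p, dist1_comm c q]
    linarith
  have hsymm : ∑ p ∈ T, ∑ q ∈ T, (dist1 c p + dist1 c q) = 2 * ∑ _p ∈ T, ∑ q ∈ T, dist1 c q := by
    simp only [sum_add_distrib]
    rw [sum_comm (f := fun p _ => dist1 c p)]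
    ring
  calc ∑ p ∈ T, ∑ q ∈ T, radialCost c p q
      ≤ ∑ p ∈ T, ∑ q ∈ T, (3 / 4 * (dist1 c p + dist1 c q) + dist1 p q / 4) :=
        sum_le_sum fun p _ => sum_le_sum fun q _ => hpair p q
    _ = 3 / 4 * ∑ p ∈ T, ∑ q ∈ T, (dist1 c p + dist1 c q) + (∑ p ∈ T, ∑ q ∈ T, dist1 p q) / 4 := by
        simp only [sum_add_distrib, ← mul_sum, ← sum_div]
    _ ≤ 7 / 4 * ∑ p ∈ T, ∑ q ∈ T, dist1 p q := by
        linarith [hsymm, sum_sum_dist1_center_le T c hc]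

theorem mm_is_74_approximation
    (P : Finset (Fin 2 → ℝ)) (k : ℕ) (hk2 : 2 ≤ k)
    (OPT : ℝ)
    (hOPT : IsLeast {x : ℝ | ∃ T ⊆ P, T.card = k ∧ w T = x} OPT) :
    ∃ c : Fin 2 → ℝ,
      (∃ p ∈ P, c 0 = p 0) ∧ (∃ q ∈ P, c 1 = q 1) ∧
      ∀ S ⊆ P, S.card = k →
        (∀ s ∈ S, ∀ t ∈ P \ S, dist1 s c ≤ dist1 t c) →
        w S ≤ (7 / 4) * OPT := by
  obtain ⟨T, hTP, hTk, rfl⟩ := hOPT.1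
  have hTne : T.Nonempty := card_pos.1 (by omega)
  choose m hmT hm using fun i : Fin 2 => T.exists_min_image (fun p => ∑ q ∈ T, |p i - q i|) hTne
  refine ⟨fun i => m i i, ⟨m 0, hTP (hmT 0), rfl⟩, ⟨m 1, hTP (hmT 1), rfl⟩, ?_⟩
  intro S _ hSk hnear
  have hS := sum_sum_dist1_le_sum_sum_radialCost S (fun i => m i i)
  have hST := sum_sum_radialCost_le_of_nearest hTP (hSk.trans hTk.symm) hnear
  have hT := sum_sum_radialCost_le T (fun i => m i i) fun i => hm i
  rw [w, w]
  linarith
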